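/- arXiv:0905.0735 — 2 statements merged into one kernel-verified Lean document; each statement's English description precedes it below -/
import Mathlib

section
/- Let Λ be a finitely aligned k-graph, x ∈ ∂Λ, and λ ∈ Λ with s(λ) = r(x). Then λx ∈ ∂Λ. -/
/-- A `k`-graph: a countable category `Λ` with a degree functor `d : Λ → ℕ^k`
satisfying the factorisation property. Morphisms form the type `Mor`,
objects (vertices) the type `Obj`. -/
structure KGraph (k : ℕ) where
  Obj : Type
  Mor : Type
  countableObj : Countable Obj
  countableMor : Countable Mor
  r : Mor → Obj
  s : Mor → Obj
  d : Mor → (Fin k → ℕ)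
  id : Obj → Mor
  comp : ∀ μ ν : Mor, s μ = r ν → Mor
  r_id : ∀ v, r (id v) = v
  s_id : ∀ v, s (id v) = v
  d_id : ∀ v, d (id v) = 0
  r_comp : ∀ μ ν h, r (comp μ ν h) = r μ
  s_comp : ∀ μ ν h, s (comp μ ν h) = s ν
  d_comp : ∀ μ ν h, d (comp μ ν h) = d μ + d ν
  id_comp : ∀ μ : Mor, comp (id (r μ)) μ (s_id (r μ)) = μ
  comp_id : ∀ μ : Mor, comp μ (id (s μ)) ((r_id (s μ)).symm) = μ
  assoc : ∀ (μ ν ρ : Mor) (h₁ : s μ = r ν) (h₂ : s ν = r ρ),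
    comp (comp μ ν h₁) ρ ((s_comp μ ν h₁).trans h₂)
      = comp μ (comp ν ρ h₂) (h₁.trans (r_comp ν ρ h₂).symm)
  factor : ∀ (lam : Mor) (m n : Fin k → ℕ), d lam = m + n →
    ∃! p : {q : Mor × Mor // s q.1 = r q.2},
      d p.val.1 = m ∧ d p.val.2 = n ∧ lam = comp p.val.1 p.val.2 p.property

namespace KGraph

variable {k : ℕ} (Λ : KGraph k)

/-- `μ` is an initial segment of `lam`, i.e. `lam = μρ` for some `ρ`. -/
def InitSeg (μ lam : Λ.Mor) : Prop :=
  ∃ (ρ : Λ.Mor) (h : Λ.s μ = Λ.r ρ), lam = Λ.comp μ ρ h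

/-- The set of minimal common extensions of `μ` and `ν`. -/
def MCE (μ ν : Λ.Mor) : Set Λ.Mor :=
  {lam | Λ.d lam = Λ.d μ ⊔ Λ.d ν ∧ Λ.InitSeg μ lam ∧ Λ.InitSeg ν lam}

/-- `Λ` is finitely aligned if all `MCE` sets are finite. -/
def FinitelyAligned : Prop := ∀ μ ν : Λ.Mor, (Λ.MCE μ ν).Finite

/-- Aperiodicity: distinct paths with the same source admit a common
extension `τ` with `MCE (ατ, βτ) = ∅`. -/
def Aperiodic : Prop :=
  ∀ α β : Λ.Mor, α ≠ β → Λ.s α = Λ.s β →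
    ∃ (τ : Λ.Mor) (hα : Λ.s α = Λ.r τ) (hβ : Λ.s β = Λ.r τ),
      Λ.MCE (Λ.comp α τ hα) (Λ.comp β τ hβ) = ∅

/-- `E` is a finite exhaustive subset of `vΛ`. -/
def IsFE (v : Λ.Obj) (E : Set Λ.Mor) : Prop :=
  E.Finite ∧ (∀ α ∈ E, Λ.r α = v) ∧
    ∀ μ : Λ.Mor, Λ.r μ = v → ∃ lam ∈ E, (Λ.MCE μ lam).Nonempty

/-- The segment `lam(p,q)` of a path `lam`, for `p ≤ q ≤ d lam`,
obtained from the factorisation property. -/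
noncomputable def seg (lam : Λ.Mor) (p q : Fin k → ℕ) (hpq : p ≤ q) (hq : q ≤ Λ.d lam) :
    Λ.Mor := by
  have h1 : Λ.d lam = p + (Λ.d lam - p) := by
    funext i; exact (Nat.add_sub_cancel' ((hpq.trans hq) i)).symm
  have hspec := (Λ.factor lam p (Λ.d lam - p) h1).exists.choose_spec
  refine (Λ.factor ((Λ.factor lam p (Λ.d lam - p) h1).exists.choose).val.2
      (q - p) (Λ.d lam - q) ?_).exists.choose.val.1
  rw [hspec.2.1]
  funext i
  have h3 : p i ≤ q i := hpq i
  have h4 : q i ≤ Λ.d lam i := hq i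
  simp only [Pi.sub_apply, Pi.add_apply]
  omega

/-- A (possibly infinite) path in `Λ`: a degree-preserving functor from
`Ω_{k,m}` (for `m = deg ∈ (ℕ ∪ {∞})^k`) to `Λ`, recorded by its segments. -/
structure InfPath (Λ : KGraph k) where
  deg : Fin k → ℕ∞
  seg : ∀ p q : Fin k → ℕ, p ≤ q → (∀ i, (q i : ℕ∞) ≤ deg i) → Λ.Mor
  d_seg : ∀ p q hpq hq, Λ.d (seg p q hpq hq) = q - p
  comp_seg : ∀ (p q r : Fin k → ℕ) (hpq : p ≤ q) (hqr : q ≤ r)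
      (hq : ∀ i, (q i : ℕ∞) ≤ deg i) (hr : ∀ i, (r i : ℕ∞) ≤ deg i),
    ∃ h : Λ.s (seg p q hpq hq) = Λ.r (seg q r hqr hr),
      Λ.comp (seg p q hpq hq) (seg q r hqr hr) h = seg p r (hpq.trans hqr) hr

/-- The vertex `x(n)` of an infinite path. -/
def InfPath.vert {Λ : KGraph k} (x : Λ.InfPath) (n : Fin k → ℕ) (hn : ∀ i, (n i : ℕ∞) ≤ x.deg i) : Λ.Obj :=
  Λ.r (x.seg n n le_rfl hn)

/-- The range `r(x) = x(0)` of an infinite path. -/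
def InfPath.rng {Λ : KGraph k} (x : Λ.InfPath) : Λ.Obj :=
  Λ.r (x.seg 0 0 le_rfl (fun i => by simp))

/-- `x` is a boundary path: it hits every finite exhaustive set. -/
def IsBoundary (x : Λ.InfPath) : Prop :=
  ∀ (n : Fin k → ℕ) (hn : ∀ i, (n i : ℕ∞) ≤ x.deg i) (E : Set Λ.Mor),
    Λ.IsFE (x.vert n hn) E →
    ∃ (p : Fin k → ℕ) (hp : ∀ i, ((n + p) i : ℕ∞) ≤ x.deg i),
      x.seg n (n + p) le_self_add hp ∈ E

/-- The set of boundary paths with range `v` is `v∂Λ`. -/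

private lemma enat_aux {a b : ℕ} {D : ℕ∞} (h2 : (a : ℕ∞) ≤ D) (h1 : (b : ℕ∞) ≤ D - a) :
    ((a + b : ℕ) : ℕ∞) ≤ D := by
  cases D with
  | top => exact le_top
  | coe dN =>
    have ha : a ≤ dN := by exact_mod_cast h2
    rw [← ENat.coe_sub] at h1
    have hb : b ≤ dN - a := by exact_mod_cast h1
    exact_mod_cast (by omega : a + b ≤ dN)

/-- The shifted path `σ^m(x)`. -/
def InfPath.shift {Λ : KGraph k} (x : Λ.InfPath) (m : Fin k → ℕ) (hm : ∀ i, (m i : ℕ∞) ≤ x.deg i) :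
    Λ.InfPath where
  deg := fun i => x.deg i - (m i : ℕ∞)
  seg := fun p q hpq hq => x.seg (m + p) (m + q) (add_le_add_right hpq m)
    (fun i => by
      have := enat_aux (hm i) (hq i)
      simpa using this)
  d_seg := fun p q hpq hq => by
    rw [x.d_seg]
    funext i
    simp only [Pi.sub_apply, Pi.add_apply]
    omega
  comp_seg := fun p q r hpq hqr hq hr =>
    x.comp_seg (m + p) (m + q) (m + r) (add_le_add_right hpq m) (add_le_add_right hqr m) _ _

/-- `w = lam · z` : the path `w` extends `z` by the finite path `lam`,
i.e. `w(0, d lam) = lam` and `σ^{d lam}(w) = z`. -/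
def InfPath.ExtendsBy {Λ : KGraph k} (w z : Λ.InfPath) (lam : Λ.Mor) : Prop :=
  ∃ h : ∀ i, ((Λ.d lam) i : ℕ∞) ≤ w.deg i,
    w.seg 0 (Λ.d lam) zero_le h = lam ∧ w.shift (Λ.d lam) h = z

/-- Local periodicity `m, n` at `v`. -/
def LocalPeriodicity (m n : Fin k → ℕ) (v : Λ.Obj) : Prop :=
  ∀ x : Λ.InfPath, Λ.IsBoundary x → x.rng = v →
    (∀ i, (((m ⊔ n) i : ℕ) : ℕ∞) ≤ x.deg i) ∧
    ∃ (hm : ∀ i, (m i : ℕ∞) ≤ x.deg i) (hn : ∀ i, (n i : ℕ∞) ≤ x.deg i),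
      x.shift m hm = x.shift n hn

/-- Cofinality of `Λ`, stated in terms of finite paths. -/
def Cofinal : Prop :=
  ∀ v w : Λ.Obj, ∃ E : Set Λ.Mor, Λ.IsFE w E ∧
    ∀ α ∈ E, ∃ lam : Λ.Mor, Λ.r lam = v ∧ Λ.s lam = Λ.s α

/-!
Let `E` be finite exhaustive at `y(n)`, where `y = λx`. With the truncated difference
`m = n - d(λ)` we have `n ≤ d(λ) + m`; put `μ = y(n, d(λ) + m)`. Finite alignment makes
`Ext(μ, E)` finite exhaustive at `s(μ) = x(m)`, so `x` meets it in some `ξ = x(m, m + p)`.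
Then `μξ = y(n, d(λ) + m + p)` lies in `MCE(μ, α)` for some `α ∈ E`; being an initial segment
of a segment of `y` starting at `n`, `α` equals `y(n, n + d(α))`.
-/

section Factorisation

variable {k : ℕ} {Λ : KGraph k}

lemma eq_and_eq_of_comp_eq_comp {μ ρ μ' ρ' : Λ.Mor} {h : Λ.s μ = Λ.r ρ}
    {h' : Λ.s μ' = Λ.r ρ'} (hc : Λ.comp μ ρ h = Λ.comp μ' ρ' h') (hd : Λ.d μ = Λ.d μ') :
    μ = μ' ∧ ρ = ρ' := by
  have hdρ : Λ.d ρ' = Λ.d ρ := by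
    have := congrArg Λ.d hc
    rw [Λ.d_comp, Λ.d_comp, hd] at this
    exact (add_left_cancel this).symm
  have := (Λ.factor _ _ _ (Λ.d_comp μ ρ h)).unique (y₁ := ⟨(μ, ρ), h⟩) (y₂ := ⟨(μ', ρ'), h'⟩)
    ⟨rfl, rfl, rfl⟩ ⟨hd.symm, hdρ, hc⟩
  exact ⟨congrArg (fun p => p.val.1) this, congrArg (fun p => p.val.2) this⟩

lemma comp_left_cancel {μ ρ ρ' : Λ.Mor} {h : Λ.s μ = Λ.r ρ} {h' : Λ.s μ = Λ.r ρ'}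
    (hc : Λ.comp μ ρ h = Λ.comp μ ρ' h') : ρ = ρ' :=
  (eq_and_eq_of_comp_eq_comp hc rfl).2

lemma initSeg_comp (μ ρ : Λ.Mor) (h : Λ.s μ = Λ.r ρ) : Λ.InitSeg μ (Λ.comp μ ρ h) :=
  ⟨ρ, h, rfl⟩

lemma initSeg_d_le {α β : Λ.Mor} (h : Λ.InitSeg α β) : Λ.d α ≤ Λ.d β := by
  obtain ⟨ρ, hρ, rfl⟩ := h
  rw [Λ.d_comp]
  exact le_self_add

lemma initSeg_trans {α β γ : Λ.Mor} (h₁ : Λ.InitSeg α β) (h₂ : Λ.InitSeg β γ) :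
    Λ.InitSeg α γ := by
  obtain ⟨ρ, hρ, rfl⟩ := h₁
  obtain ⟨σ, hσ, rfl⟩ := h₂
  have hρσ : Λ.s ρ = Λ.r σ := (Λ.s_comp α ρ hρ).symm.trans hσ
  exact ⟨Λ.comp ρ σ hρσ, hρ.trans (Λ.r_comp ρ σ hρσ).symm, Λ.assoc α ρ σ hρ hρσ⟩

lemma initSeg_unique {α α' β : Λ.Mor} (h : Λ.InitSeg α β) (h' : Λ.InitSeg α' β)
    (hd : Λ.d α = Λ.d α') : α = α' := by
  obtain ⟨ρ, hρ, rfl⟩ := h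
  obtain ⟨ρ', hρ', hβ⟩ := h'
  exact (eq_and_eq_of_comp_eq_comp hβ hd).1

lemma exists_initSeg_d_eq (β : Λ.Mor) {m : Fin k → ℕ} (hm : m ≤ Λ.d β) :
    ∃ α, Λ.InitSeg α β ∧ Λ.d α = m := by
  obtain ⟨⟨⟨α, ρ⟩, hαρ⟩, ⟨hdα, -, hβ⟩, -⟩ :=
    Λ.factor β m (Λ.d β - m) (add_tsub_cancel_of_le hm).symm
  exact ⟨α, ⟨ρ, hαρ, hβ⟩, hdα⟩

lemma initSeg_of_initSeg_of_d_le {α ν β : Λ.Mor} (hα : Λ.InitSeg α β) (hν : Λ.InitSeg ν β)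
    (hd : Λ.d α ≤ Λ.d ν) : Λ.InitSeg α ν := by
  obtain ⟨α', hα'ν, hdα'⟩ := exists_initSeg_d_eq ν hd
  rwa [initSeg_unique hα (initSeg_trans hα'ν hν) hdα'.symm]

lemma initSeg_of_initSeg_comp_comp {μ ρ θ : Λ.Mor} {h : Λ.s μ = Λ.r ρ} {h' : Λ.s μ = Λ.r θ}
    (hI : Λ.InitSeg (Λ.comp μ ρ h) (Λ.comp μ θ h')) : Λ.InitSeg ρ θ := by
  obtain ⟨κ, hκ, hθ⟩ := hI
  have hρκ : Λ.s ρ = Λ.r κ := (Λ.s_comp μ ρ h).symm.trans hκ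
  exact ⟨κ, hρκ, comp_left_cancel (hθ.trans (Λ.assoc μ ρ κ h hρκ))⟩

lemma exists_mem_mce_initSeg {ρ σ β : Λ.Mor} (hρ : Λ.InitSeg ρ β) (hσ : Λ.InitSeg σ β) :
    ∃ ν ∈ Λ.MCE ρ σ, Λ.InitSeg ν β := by
  obtain ⟨ν, hνβ, hdν⟩ :=
    exists_initSeg_d_eq β (sup_le (initSeg_d_le hρ) (initSeg_d_le hσ))
  exact ⟨ν, ⟨hdν, initSeg_of_initSeg_of_d_le hρ hνβ (hdν ▸ le_sup_left),
    initSeg_of_initSeg_of_d_le hσ hνβ (hdν ▸ le_sup_right)⟩, hνβ⟩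

end Factorisation

section Extensions

variable {k : ℕ} {Λ : KGraph k}

/-- The paper's `Ext(μ, E)`: for `ν ∈ MCE(μ, α)`, the segment `ν(d μ, d μ ∨ d α)` is the `ξ`
with `ν = μξ`. -/
def extSet (μ : Λ.Mor) (E : Set Λ.Mor) : Set Λ.Mor :=
  {ξ | ∃ h : Λ.s μ = Λ.r ξ, ∃ α ∈ E, Λ.comp μ ξ h ∈ Λ.MCE μ α}

lemma extSet_finite (hFA : Λ.FinitelyAligned) (μ : Λ.Mor) {E : Set Λ.Mor} (hE : E.Finite) :
    (extSet μ E).Finite := by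
  classical
  let f : Λ.Mor → Λ.Mor := fun ξ => if h : Λ.s μ = Λ.r ξ then Λ.comp μ ξ h else ξ
  refine Set.Finite.of_finite_image (f := f) ((hE.biUnion fun α _ => hFA μ α).subset ?_) ?_
  · rintro _ ⟨ξ, ⟨h, α, hα, hν⟩, rfl⟩
    simp only [f, dif_pos h]
    exact Set.mem_biUnion hα hν
  · rintro ξ ⟨h, -⟩ ξ' ⟨h', -⟩ hf
    simp only [f, dif_pos h, dif_pos h'] at hf
    exact comp_left_cancel hf

lemma isFE_extSet (hFA : Λ.FinitelyAligned) {v : Λ.Obj} {μ : Λ.Mor} {E : Set Λ.Mor}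
    (hE : Λ.IsFE v E) (hμ : Λ.r μ = v) : Λ.IsFE (Λ.s μ) (extSet μ E) := by
  refine ⟨extSet_finite hFA μ hE.1, fun ξ hξ => hξ.choose.symm, fun ρ hρ => ?_⟩
  have hμρ : Λ.s μ = Λ.r ρ := hρ.symm
  obtain ⟨α, hαE, τ, -, hμρτ, hατ⟩ :=
    hE.2.2 (Λ.comp μ ρ hμρ) ((Λ.r_comp μ ρ hμρ).trans hμ)
  have hμτ := initSeg_trans (initSeg_comp μ ρ hμρ) hμρτ
  obtain ⟨ν, ⟨hdν, hμν, hαν⟩, hντ⟩ := exists_mem_mce_initSeg hμτ hατ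
  obtain ⟨θ, hθ, rfl⟩ := hμτ
  obtain ⟨σ, hσ, rfl⟩ := hμν
  obtain ⟨κ, hκ, -⟩ := exists_mem_mce_initSeg (initSeg_of_initSeg_comp_comp hμρτ)
    (initSeg_of_initSeg_comp_comp hντ)
  exact ⟨σ, ⟨hσ, α, hαE, hdν, initSeg_comp μ σ hσ, hαν⟩, κ, hκ⟩

end Extensions

section Paths

variable {k : ℕ} {Λ : KGraph k}

lemma InfPath.s_seg (x : Λ.InfPath) {p q : Fin k → ℕ} (hpq : p ≤ q)
    (hq : ∀ i, (q i : ℕ∞) ≤ x.deg i) : Λ.s (x.seg p q hpq hq) = x.vert q hq :=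
  (x.comp_seg p q q hpq le_rfl hq hq).1

lemma InfPath.r_seg (x : Λ.InfPath) {p q : Fin k → ℕ} (hpq : p ≤ q)
    (hq : ∀ i, (q i : ℕ∞) ≤ x.deg i) (hp : ∀ i, (p i : ℕ∞) ≤ x.deg i) :
    Λ.r (x.seg p q hpq hq) = x.vert p hp := by
  obtain ⟨h, hc⟩ := x.comp_seg p p q le_rfl hpq hp hq
  rw [← hc, Λ.r_comp]
  rfl

lemma InfPath.exists_seg_eq_of_initSeg (x : Λ.InfPath) {n N : Fin k → ℕ} (hnN : n ≤ N)
    (hN : ∀ i, (N i : ℕ∞) ≤ x.deg i) {α : Λ.Mor} (hα : Λ.InitSeg α (x.seg n N hnN hN)) :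
    ∃ h : ∀ i, ((n + Λ.d α) i : ℕ∞) ≤ x.deg i, x.seg n (n + Λ.d α) le_self_add h = α := by
  have hdα : n + Λ.d α ≤ N := by
    have := initSeg_d_le hα
    rw [x.d_seg] at this
    simpa [add_comm] using add_le_of_le_tsub_right_of_le hnN this
  have h : ∀ i, ((n + Λ.d α) i : ℕ∞) ≤ x.deg i := fun i => (Nat.cast_le.2 (hdα i)).trans (hN i)
  obtain ⟨hc, hcomp⟩ := x.comp_seg n (n + Λ.d α) N le_self_add hdα h hN
  refine ⟨h, initSeg_unique ⟨_, hc, hcomp.symm⟩ hα ?_⟩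
  rw [x.d_seg, add_tsub_cancel_left]

theorem isBoundary_of_isBoundary_shift (hFA : Λ.FinitelyAligned) {y : Λ.InfPath}
    {a : Fin k → ℕ} (ha : ∀ i, (a i : ℕ∞) ≤ y.deg i) (hx : Λ.IsBoundary (y.shift a ha)) :
    Λ.IsBoundary y := by
  intro n hn E hE
  set m := n - a
  have hm : ∀ i, (m i : ℕ∞) ≤ (y.shift a ha).deg i := fun i => by
    show ((n i - a i : ℕ) : ℕ∞) ≤ y.deg i - a i
    rw [ENat.natCast_sub]
    exact tsub_le_tsub_right (hn i) _
  have hnq : n ≤ a + m := le_add_tsub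
  have hq : ∀ i, ((a + m) i : ℕ∞) ≤ y.deg i := fun i => enat_aux (ha i) (hm i)
  set μ := y.seg n (a + m) hnq hq
  have hFE : Λ.IsFE ((y.shift a ha).vert m hm) (extSet μ E) := by
    have := isFE_extSet hFA hE (y.r_seg hnq hq hn)
    rwa [y.s_seg] at this
  obtain ⟨p, hp, _, α, hαE, -, -, hαν⟩ := hx m hm (extSet μ E) hFE
  have hN : ∀ i, ((a + (m + p)) i : ℕ∞) ≤ y.deg i := fun i => enat_aux (ha i) (hp i)
  have hmp : a + m ≤ a + (m + p) := add_le_add_right le_self_add a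
  obtain ⟨_, hcomp⟩ := y.comp_seg n (a + m) (a + (m + p)) hnq hmp hq hN
  have hαy : Λ.InitSeg α (y.seg n (a + (m + p)) (hnq.trans hmp) hN) := by
    rw [← hcomp]
    exact hαν
  obtain ⟨h, hα⟩ := y.exists_seg_eq_of_initSeg _ _ hαy
  exact ⟨Λ.d α, h, by rwa [hα]⟩

end Paths

theorem extend_boundary (hFA : Λ.FinitelyAligned)
    (x : Λ.InfPath) (hx : Λ.IsBoundary x) (lam : Λ.Mor)
    (y : Λ.InfPath) (hy : y.ExtendsBy x lam) :
    Λ.IsBoundary y := by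
  obtain ⟨ha, -, rfl⟩ := hy
  exact isBoundary_of_isBoundary_shift hFA ha hx

end KGraph
end

section
/- A row-finite locally convex k-graph Λ is cofinal if and only if for every v, w ∈ Λ^0 there exists n ∈ ℕ^k such that vΛs(α) ≠ ∅ for every α ∈ wΛ^{≤n}. -/
namespace KGraph

variable {k : ℕ} (Λ : KGraph k)

/-- Membership in `Λ^{≤ n}`. -/
def LeSet (lam : Λ.Mor) (n : Fin k → ℕ) : Prop :=
  Λ.d lam ≤ n ∧ ∀ i : Fin k, Λ.d lam i < n i →
    ¬ ∃ g : Λ.Mor, Λ.d g = Pi.single i 1 ∧ Λ.r g = Λ.s lam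

/-- Local convexity of `Λ`. -/
def LocallyConvex : Prop :=
  ∀ (i j : Fin k), i ≠ j → ∀ e f : Λ.Mor,
    Λ.d e = Pi.single i 1 → Λ.d f = Pi.single j 1 → Λ.r e = Λ.r f →
      (∃ g, Λ.d g = Pi.single j 1 ∧ Λ.r g = Λ.s e) ∧
      (∃ g, Λ.d g = Pi.single i 1 ∧ Λ.r g = Λ.s f)

/-- Row-finiteness of `Λ`. -/
def RowFinite : Prop :=
  ∀ (v : Λ.Obj) (n : Fin k → ℕ), {lam : Λ.Mor | Λ.r lam = v ∧ Λ.d lam = n}.Finite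

/-! If `E ⊆ wΛ` witnesses cofinality, take `n` to be the join of the degrees in `E`. A path
`α ∈ wΛ^{≤ n}` extends only in colours `i` with `d(α)_i = n_i`, so every `β ∈ E` meeting it is
an initial segment of `α`, and a path from `v` to `s(β)` continues to `s(α)`. Conversely,
`wΛ^{≤ n}` is finite by row-finiteness and exhaustive by local convexity: extend `μ ∈ wΛ` to a
path `ν ∈ Λ^{≤ d(μ) ∨ n}` and take its initial segment of degree `n ∧ d(ν)`. -/

/-- `vΛ^{e_i} ≠ ∅`. -/
def HasEdge (i : Fin k) (v : Λ.Obj) : Prop :=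
  ∃ g : Λ.Mor, Λ.d g = Pi.single i 1 ∧ Λ.r g = v

variable {Λ}

theorem single_le_of_pos {m : Fin k → ℕ} {i : Fin k} (h : 0 < m i) : Pi.single i 1 ≤ m := by
  intro j
  rcases eq_or_ne j i with rfl | hj
  · simp only [Pi.single_eq_same]
    omega
  · simp [hj]

theorem sub_single_lt_of_pos {m : Fin k → ℕ} {i : Fin k} (h : 0 < m i) :
    m - Pi.single i 1 < m :=
  Pi.lt_def.2 ⟨tsub_le_self, i, by simpa using h⟩

theorem exists_comp_eq_of_le {lam : Λ.Mor} {m : Fin k → ℕ} (h : m ≤ Λ.d lam) :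
    ∃ (μ ρ : Λ.Mor) (hμρ : Λ.s μ = Λ.r ρ),
      Λ.d μ = m ∧ Λ.d ρ = Λ.d lam - m ∧ lam = Λ.comp μ ρ hμρ := by
  obtain ⟨⟨⟨μ, ρ⟩, hμρ⟩, ⟨hμ, hρ, hlam⟩, -⟩ :=
    Λ.factor lam m (Λ.d lam - m) (add_tsub_cancel_of_le h).symm
  exact ⟨μ, ρ, hμρ, hμ, hρ, hlam⟩

theorem eq_id_of_d_eq_zero {lam : Λ.Mor} (h : Λ.d lam = 0) : lam = Λ.id (Λ.r lam) := by
  have := (Λ.factor lam 0 0 (by rw [h, add_zero])).unique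
    (y₁ := ⟨(Λ.id (Λ.r lam), lam), Λ.s_id _⟩) (y₂ := ⟨(lam, Λ.id (Λ.s lam)), (Λ.r_id _).symm⟩)
    ⟨Λ.d_id _, h, (Λ.id_comp lam).symm⟩ ⟨h, Λ.d_id _, (Λ.comp_id lam).symm⟩
  exact (congrArg (fun p => p.val.1) this).symm

theorem s_eq_r_of_d_eq_zero {lam : Λ.Mor} (h : Λ.d lam = 0) : Λ.s lam = Λ.r lam := by
  rw [eq_id_of_d_eq_zero h, Λ.s_id, Λ.r_id]

theorem comp_eq_self_of_d_eq_zero {μ ρ : Λ.Mor} (h : Λ.s μ = Λ.r ρ) (hρ : Λ.d ρ = 0) :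
    Λ.comp μ ρ h = μ := by
  obtain rfl : ρ = Λ.id (Λ.s μ) := (eq_id_of_d_eq_zero hρ).trans (congrArg Λ.id h.symm)
  exact Λ.comp_id μ

theorem InitSeg.r_eq {μ lam : Λ.Mor} (h : Λ.InitSeg μ lam) : Λ.r lam = Λ.r μ := by
  obtain ⟨ρ, hs, rfl⟩ := h
  exact Λ.r_comp _ _ _

theorem InitSeg.d_le {μ lam : Λ.Mor} (h : Λ.InitSeg μ lam) : Λ.d μ ≤ Λ.d lam := by
  obtain ⟨ρ, hs, rfl⟩ := h
  rw [Λ.d_comp]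
  exact le_self_add

theorem InitSeg.trans {a b c : Λ.Mor} (hab : Λ.InitSeg a b) (hbc : Λ.InitSeg b c) :
    Λ.InitSeg a c := by
  obtain ⟨ρ, hs, rfl⟩ := hab
  obtain ⟨σ, hs', rfl⟩ := hbc
  have hρσ : Λ.s ρ = Λ.r σ := (Λ.s_comp a ρ hs).symm.trans hs'
  exact ⟨Λ.comp ρ σ hρσ, hs.trans (Λ.r_comp ρ σ hρσ).symm, Λ.assoc a ρ σ hs hρσ⟩

theorem exists_initSeg {lam : Λ.Mor} {m : Fin k → ℕ} (h : m ≤ Λ.d lam) :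
    ∃ μ, Λ.InitSeg μ lam ∧ Λ.d μ = m := by
  obtain ⟨μ, ρ, hμρ, hμ, -, hlam⟩ := exists_comp_eq_of_le h
  exact ⟨μ, ⟨ρ, hμρ, hlam⟩, hμ⟩

theorem InitSeg.eq_of_d_eq {μ₁ μ₂ lam : Λ.Mor} (h₁ : Λ.InitSeg μ₁ lam) (h₂ : Λ.InitSeg μ₂ lam)
    (hd : Λ.d μ₁ = Λ.d μ₂) : μ₁ = μ₂ := by
  obtain ⟨ρ₁, hs₁, he₁⟩ := h₁
  obtain ⟨ρ₂, hs₂, he₂⟩ := h₂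
  have hd₁ : Λ.d lam = Λ.d μ₁ + Λ.d ρ₁ := by rw [he₁, Λ.d_comp]
  have hd₂ : Λ.d lam = Λ.d μ₂ + Λ.d ρ₂ := by rw [he₂, Λ.d_comp]
  have hρ : Λ.d ρ₂ = Λ.d ρ₁ := by rw [← hd] at hd₂; exact add_left_cancel (hd₂.symm.trans hd₁)
  have := (Λ.factor lam (Λ.d μ₁) (Λ.d ρ₁) hd₁).unique
    (y₁ := ⟨(μ₁, ρ₁), hs₁⟩) (y₂ := ⟨(μ₂, ρ₂), hs₂⟩) ⟨rfl, rfl, he₁⟩ ⟨hd.symm, hρ, he₂⟩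
  exact congrArg (fun p => p.val.1) this

theorem InitSeg.of_d_le {a b c : Λ.Mor} (hac : Λ.InitSeg a c) (hbc : Λ.InitSeg b c)
    (hd : Λ.d a ≤ Λ.d b) : Λ.InitSeg a b := by
  obtain ⟨a', ha'b, ha'⟩ := exists_initSeg hd
  rwa [← (ha'b.trans hbc).eq_of_d_eq hac ha']

theorem mce_nonempty_of_initSeg {μ lam ν : Λ.Mor} (hμ : Λ.InitSeg μ ν) (hlam : Λ.InitSeg lam ν) :
    (Λ.MCE μ lam).Nonempty := by
  obtain ⟨κ, hκν, hκ⟩ := exists_initSeg (sup_le hμ.d_le hlam.d_le)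
  exact ⟨κ, hκ, hμ.of_d_le hκν (hκ ▸ le_sup_left), hlam.of_d_le hκν (hκ ▸ le_sup_right)⟩

theorem hasEdge_r_of_d_pos {ρ : Λ.Mor} {i : Fin k} (h : 0 < Λ.d ρ i) :
    Λ.HasEdge i (Λ.r ρ) := by
  obtain ⟨g, ρ', _, hg, -, rfl⟩ := exists_comp_eq_of_le (single_le_of_pos h)
  exact ⟨g, hg, (Λ.r_comp _ _ _).symm⟩

/-- Local convexity lets an `i`-edge at `r ρ` be pushed, one edge of `ρ` at a time, to `s ρ`. -/
theorem hasEdge_s_of_d_eq_zero (hlc : Λ.LocallyConvex) {ρ : Λ.Mor} {i : Fin k}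
    (hρ : Λ.d ρ i = 0) (h : Λ.HasEdge i (Λ.r ρ)) : Λ.HasEdge i (Λ.s ρ) := by
  obtain ⟨m, hm⟩ : ∃ m, Λ.d ρ = m := ⟨_, rfl⟩
  induction m using WellFoundedLT.induction generalizing ρ with
  | _ m ih =>
  subst hm
  by_cases hρ0 : Λ.d ρ = 0
  · rwa [s_eq_r_of_d_eq_zero hρ0]
  obtain ⟨j, hj⟩ : ∃ j, 0 < Λ.d ρ j := by
    by_contra! hc
    exact hρ0 (funext fun j => Nat.le_zero.1 (hc j))
  have hij : i ≠ j := by rintro rfl; omega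
  obtain ⟨f, ρ', hfρ', hf, hρ', rfl⟩ := exists_comp_eq_of_le (single_le_of_pos hj)
  obtain ⟨g, hg, hrg⟩ := h
  obtain ⟨-, hedge⟩ := hlc i j hij g f hg hf (hrg.trans (Λ.r_comp _ _ _))
  rw [Λ.s_comp]
  refine ih _ (by rw [hρ']; exact sub_single_lt_of_pos hj) ?_ (hfρ' ▸ hedge) rfl
  simp [hρ', hρ, hij]

theorem LeSet.comp {τ μ : Λ.Mor} {m : Fin k → ℕ} (hτ : Λ.LeSet τ m) (hs : Λ.s μ = Λ.r τ) :
    Λ.LeSet (Λ.comp μ τ hs) (Λ.d μ + m) := by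
  refine ⟨?_, fun i hi => ?_⟩
  · rw [Λ.d_comp]
    exact add_le_add le_rfl hτ.1
  · rw [Λ.s_comp]
    rw [Λ.d_comp] at hi
    exact hτ.2 i (by simpa using hi)

theorem exists_leSet (u : Λ.Obj) (m : Fin k → ℕ) : ∃ τ, Λ.r τ = u ∧ Λ.LeSet τ m := by
  induction m using WellFoundedLT.induction generalizing u with
  | _ m ih =>
  by_cases hedge : ∃ i, 0 < m i ∧ Λ.HasEdge i u
  · obtain ⟨i, hi, g, hg, rfl⟩ := hedge
    obtain ⟨τ, hτ, hτm⟩ := ih _ (sub_single_lt_of_pos hi) (Λ.s g)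
    refine ⟨Λ.comp g τ hτ.symm, Λ.r_comp _ _ _, ?_⟩
    simpa only [hg, add_tsub_cancel_of_le (single_le_of_pos hi)] using hτm.comp hτ.symm
  · push Not at hedge
    refine ⟨Λ.id u, Λ.r_id u, by simp [Λ.d_id], fun i hi => ?_⟩
    rw [Λ.s_id]
    exact hedge i (by simpa [Λ.d_id] using hi)

theorem exists_initSeg_leSet {μ : Λ.Mor} {m : Fin k → ℕ} (h : Λ.d μ ≤ m) :
    ∃ ν, Λ.InitSeg μ ν ∧ Λ.LeSet ν m := by
  obtain ⟨τ, hτ, hτm⟩ := exists_leSet (Λ.s μ) (m - Λ.d μ)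
  refine ⟨Λ.comp μ τ hτ.symm, ⟨τ, hτ.symm, rfl⟩, ?_⟩
  simpa only [add_tsub_cancel_of_le h] using hτm.comp hτ.symm

theorem LeSet.d_eq_zero_of_lt {α ρ : Λ.Mor} {n : Fin k → ℕ} {i : Fin k} (hα : Λ.LeSet α n)
    (hs : Λ.s α = Λ.r ρ) (hi : Λ.d α i < n i) : Λ.d ρ i = 0 := by
  by_contra hρ
  exact hα.2 i hi (hs ▸ hasEdge_r_of_d_pos (Nat.pos_of_ne_zero hρ))

theorem LeSet.initSeg_of_mem_MCE {α β κ : Λ.Mor} {n : Fin k → ℕ} (hα : Λ.LeSet α n)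
    (hβ : Λ.d β ≤ n) (hκ : κ ∈ Λ.MCE α β) : Λ.InitSeg β α := by
  obtain ⟨hdκ, ⟨α', hαα', rfl⟩, hβκ⟩ := hκ
  have hα' : Λ.d α' = 0 := by
    funext i
    rw [Pi.zero_apply]
    by_contra hi
    have hdi := congrFun hdκ i
    have : Λ.d β i ≤ n i := hβ i
    simp only [Λ.d_comp, Pi.add_apply, Pi.sup_apply] at hdi
    exact hi (hα.d_eq_zero_of_lt hαα' (by omega))
  rwa [comp_eq_self_of_d_eq_zero hαα' hα'] at hβκ

/-- Truncating a path of `Λ^{≤ m}` to degree `n ⊓ d ν` lands in `Λ^{≤ n}`: an `i`-edge left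
at the cut would survive, by local convexity, to the end of `ν`. -/
theorem LeSet.initSeg (hlc : Λ.LocallyConvex) {ν lam : Λ.Mor} {m n : Fin k → ℕ}
    (hν : Λ.LeSet ν m) (hnm : n ≤ m) (hlam : Λ.InitSeg lam ν) (hd : Λ.d lam = n ⊓ Λ.d ν) :
    Λ.LeSet lam n := by
  refine ⟨hd ▸ inf_le_left, fun i hi hedge => ?_⟩
  obtain ⟨σ, hs, rfl⟩ := hlam
  have hdi := congrFun hd i
  simp only [Λ.d_comp, Pi.inf_apply, Pi.add_apply] at hdi
  have : n i ≤ m i := hnm i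
  refine hν.2 i ?_ (Λ.s_comp lam σ hs ▸ hasEdge_s_of_d_eq_zero hlc ?_ (hs ▸ hedge))
  · rw [Λ.d_comp, Pi.add_apply]
    omega
  · omega

theorem finite_leSet (hrf : Λ.RowFinite) (w : Λ.Obj) (n : Fin k → ℕ) :
    {α : Λ.Mor | Λ.r α = w ∧ Λ.LeSet α n}.Finite := by
  refine ((Set.finite_Iic n).biUnion fun m _ => hrf w m).subset ?_
  rintro α ⟨hα, hαn⟩
  exact Set.mem_biUnion hαn.1 ⟨hα, rfl⟩

theorem isFE_leSet (hrf : Λ.RowFinite) (hlc : Λ.LocallyConvex) (w : Λ.Obj) (n : Fin k → ℕ) :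
    Λ.IsFE w {α : Λ.Mor | Λ.r α = w ∧ Λ.LeSet α n} := by
  refine ⟨finite_leSet hrf w n, fun α hα => hα.1, fun μ hμ => ?_⟩
  obtain ⟨ν, hμν, hν⟩ := exists_initSeg_leSet (le_sup_left : Λ.d μ ≤ Λ.d μ ⊔ n)
  obtain ⟨lam, hlamν, hlam⟩ := exists_initSeg (inf_le_right : n ⊓ Λ.d ν ≤ Λ.d ν)
  exact ⟨lam, ⟨hlamν.r_eq.symm.trans (hμν.r_eq.trans hμ), hν.initSeg hlc le_sup_right hlamν hlam⟩,
    mce_nonempty_of_initSeg hμν hlamν⟩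

/-- A row-finite locally convex `k`-graph is cofinal iff for all vertices
`v, w` there is `n ∈ ℕ^k` with `vΛs(α) ≠ ∅` for every `α ∈ wΛ^{≤ n}`. -/
theorem row_finite_locally_convex_cofinal_iff
    (hrf : Λ.RowFinite) (hlc : Λ.LocallyConvex) :
    Λ.Cofinal ↔
      ∀ v w : Λ.Obj, ∃ n : Fin k → ℕ,
        ∀ α : Λ.Mor, Λ.r α = w → Λ.LeSet α n →
          ∃ lam : Λ.Mor, Λ.r lam = v ∧ Λ.s lam = Λ.s α := by
  constructor
  · intro hcof v w
    obtain ⟨E, ⟨hEfin, -, hEex⟩, hEv⟩ := hcof v w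
    refine ⟨hEfin.toFinset.sup Λ.d, fun α hα hαn => ?_⟩
    obtain ⟨β, hβE, κ, hκ⟩ := hEex α hα
    obtain ⟨ρ, hβρ, rfl⟩ :=
      hαn.initSeg_of_mem_MCE (Finset.le_sup (hEfin.mem_toFinset.2 hβE)) hκ
    obtain ⟨lam, hlam, hlamβ⟩ := hEv β hβE
    exact ⟨Λ.comp lam ρ (hlamβ.trans hβρ), (Λ.r_comp _ _ _).trans hlam,
      (Λ.s_comp _ _ _).trans (Λ.s_comp _ _ _).symm⟩
  · intro h v w
    obtain ⟨n, hn⟩ := h v w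
    exact ⟨_, isFE_leSet hrf hlc w n, fun α hα => hn α hα.1 hα.2⟩

end KGraph
end
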